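/- Let f : C → Set A be an atomized model, let d and e be terms over C, and let f' be the full crossing of d into e. Then for all terms a, b over C: f' satisfies a ≤ b if and only if either f satisfies a ≤ b, or f satisfies both a ∪ d ≤ b ∪ d and e ≤ b (where a ∪ d denotes the term formed by the union of the sets of constants a and d, whose atom set is the union of the atom sets of a and d). -/

import Mathlib

/-- The atom set of a term (set of constants) `t` under the atomized model `f`. -/
def atomSet {C A : Type*} (f : C → Set A) (t : Set C) : Set A := ⋃ c ∈ t, f c

/-- The atomized model `f` satisfies the positive relation `s ≤ t`. -/
def Sat {C A : Type*} (f : C → Set A) (s t : Set C) : Prop := atomSet f s ⊆ atomSet f t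

/-- The full crossing of the term `d` into the term `e` in the atomized model `f`. -/
def fullCross {C A : Type*} (f : C → Set A) (d e : Set C) : C → Set (A ⊕ A × A) :=
  fun c => {z | Sum.elim
    (fun x => x ∈ f c ∧ x ∉ atomSet f d \ atomSet f e)
    (fun p : A × A =>
      p.1 ∈ atomSet f d \ atomSet f e ∧ p.2 ∈ atomSet f e ∧ (p.1 ∈ f c ∨ p.2 ∈ f c)) z}

/-!
Write `A, B, D, E` for the atom sets of `a, b, d, e` under `f` and `Φ = D \ E`. The crossing keeps
the atoms outside `Φ` and replaces each `φ ∈ Φ` by the pairs `(φ, ε)` with `ε ∈ E`, a pair lying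
in a term exactly when `φ` or `ε` does. So `f'` satisfies `a ≤ b` iff `A \ Φ ⊆ B` and every pair
atom of `a` is one of `b`. If some `ε ∈ E` misses `B`, the pair `(φ, ε)` forces every `φ ∈ A ∩ Φ`
into `B`, whence `A ⊆ B`; if `E ⊆ B`, every pair atom lies in `b` and `A \ Φ ⊆ B` amounts to
`A ⊆ B ∪ D`.
-/

open Set

section AtomSet

variable {C A : Type*} {f : C → Set A}

lemma mem_atomSet {t : Set C} {x : A} : x ∈ atomSet f t ↔ ∃ c ∈ t, x ∈ f c := by
  simp [atomSet]

lemma atomSet_union (f : C → Set A) (s t : Set C) :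
    atomSet f (s ∪ t) = atomSet f s ∪ atomSet f t :=
  biUnion_union s t f

variable {d e t : Set C}

lemma inl_mem_atomSet_fullCross {x : A} :
    Sum.inl x ∈ atomSet (fullCross f d e) t ↔
      x ∈ atomSet f t ∧ x ∉ atomSet f d \ atomSet f e := by
  simp only [mem_atomSet, fullCross, mem_ofPred_eq, Sum.elim_inl]
  constructor
  · rintro ⟨c, hc, hx, hΦ⟩
    exact ⟨⟨c, hc, hx⟩, hΦ⟩
  · rintro ⟨⟨c, hc, hx⟩, hΦ⟩
    exact ⟨c, hc, hx, hΦ⟩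

lemma inr_mem_atomSet_fullCross {p : A × A} :
    Sum.inr p ∈ atomSet (fullCross f d e) t ↔
      p.1 ∈ atomSet f d \ atomSet f e ∧ p.2 ∈ atomSet f e ∧
        (p.1 ∈ atomSet f t ∨ p.2 ∈ atomSet f t) := by
  simp only [mem_atomSet, fullCross, mem_ofPred_eq, Sum.elim_inr]
  constructor
  · rintro ⟨c, hc, hΦ, hE, hp | hp⟩
    exacts [⟨hΦ, hE, .inl ⟨c, hc, hp⟩⟩, ⟨hΦ, hE, .inr ⟨c, hc, hp⟩⟩]
  · rintro ⟨hΦ, hE, ⟨c, hc, hp⟩ | ⟨c, hc, hp⟩⟩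
    exacts [⟨c, hc, hΦ, hE, .inl hp⟩, ⟨c, hc, hΦ, hE, .inr hp⟩]

lemma sat_fullCross_iff {a b : Set C} :
    Sat (fullCross f d e) a b ↔
      atomSet f a \ (atomSet f d \ atomSet f e) ⊆ atomSet f b ∧
        ∀ φ ∈ atomSet f d \ atomSet f e, ∀ ε ∈ atomSet f e,
          φ ∈ atomSet f a ∨ ε ∈ atomSet f a → φ ∈ atomSet f b ∨ ε ∈ atomSet f b := by
  constructor
  · intro h
    refine ⟨fun x hx => ?_, fun φ hφ ε hε hpair => ?_⟩
    · exact (inl_mem_atomSet_fullCross.1 (h (inl_mem_atomSet_fullCross.2 hx))).1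
    · exact (inr_mem_atomSet_fullCross.1
        (h (inr_mem_atomSet_fullCross (p := (φ, ε)) |>.2 ⟨hφ, hε, hpair⟩))).2.2
  · rintro ⟨hinl, hinr⟩ (x | ⟨φ, ε⟩) hz
    · obtain ⟨hx, hΦ⟩ := inl_mem_atomSet_fullCross.1 hz
      exact inl_mem_atomSet_fullCross.2 ⟨hinl ⟨hx, hΦ⟩, hΦ⟩
    · obtain ⟨hφ, hε, hpair⟩ := inr_mem_atomSet_fullCross.1 hz
      exact inr_mem_atomSet_fullCross.2 ⟨hφ, hε, hinr φ hφ ε hε hpair⟩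

end AtomSet

lemma Set.crossing_condition_iff {α : Type*} {A B D E : Set α} :
    (A \ (D \ E) ⊆ B ∧ ∀ φ ∈ D \ E, ∀ ε ∈ E, φ ∈ A ∨ ε ∈ A → φ ∈ B ∨ ε ∈ B) ↔
      A ⊆ B ∨ (A ∪ D ⊆ B ∪ D ∧ E ⊆ B) := by
  constructor
  · rintro ⟨hinl, hinr⟩
    by_cases hEB : E ⊆ B
    · have hA : A ⊆ D ∪ B :=
        (sdiff_subset_iff.1 hinl).trans (union_subset_union_left B sdiff_subset)
      exact .inr ⟨union_subset (hA.trans (union_comm D B).le) subset_union_right, hEB⟩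
    · obtain ⟨ε, hεE, hεB⟩ := not_subset.1 hEB
      refine .inl fun x hx => ?_
      by_cases hΦ : x ∈ D \ E
      · exact (hinr x hΦ ε hεE (.inl hx)).resolve_right hεB
      · exact hinl ⟨hx, hΦ⟩
  · rintro (hAB | ⟨hAD, hEB⟩)
    · exact ⟨sdiff_subset.trans hAB, fun φ _ ε _ h => h.imp (@hAB φ) (@hAB ε)⟩
    · refine ⟨fun x ⟨hxA, hxΦ⟩ => ?_, fun φ _ ε hε _ => .inr (hEB hε)⟩
      rcases hAD (.inl hxA) with hB | hD
      · exact hB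
      · exact hEB (by_contra fun hE => hxΦ ⟨hD, hE⟩)

/-- The full crossing of `d` into `e` satisfies `a ≤ b` iff either `f`
already satisfied `a ≤ b`, or `f` satisfied both `a ∪ d ≤ b ∪ d` and `e ≤ b`. -/
theorem fullCross_positive_characterization {C A : Type*} (f : C → Set A) (d e : Set C) :
    ∀ a b : Set C,
      Sat (fullCross f d e) a b ↔
        (Sat f a b ∨ (Sat f (a ∪ d) (b ∪ d) ∧ Sat f e b)) := by
  intro a b
  simp only [Sat, atomSet_union]
  exact sat_fullCross_iff.trans Set.crossing_condition_iff
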